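/- Let U be a unitary operator and P, Q selfadjoint operators with 0 ≤ P ≤ 1, 0 ≤ Q ≤ 1 on a Hilbert space H, and set V := P U Q. Then for every z with |z| < 1 and every ψ ∈ H, ‖(U* - V*)(1 - zV*)⁻¹ ψ‖² ≤ 8 ⟨ψ, Re((1 - zV*)⁻¹) ψ⟩. -/

import Mathlib

open ContinuousLinearMap RCLike
open scoped InnerProductSpace

/-!
Write `φ = G ψ`, so that `ψ = φ - z V* φ`. Since `|z| < 1`,
`Re ⟪ψ, φ⟫ ≥ ‖φ‖² - ‖V* φ‖ ‖φ‖ ≥ (‖φ‖² - ‖V* φ‖²) / 2`.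
On the other hand `V* = Q U* P`, so `(U* - V*) φ = U* (1 - P) φ + (1 - Q) U* P φ`, and for
`0 ≤ A ≤ 1` the operator `A - A²` is positive, i.e. `‖(1 - A) x‖² + ‖A x‖² ≤ ‖x‖²`.
Applying this to `P` at `φ` and to `Q` at `U* P φ` bounds the square of the sum by
`2 (‖φ‖² - ‖V* φ‖²) ≤ 4 Re ⟪ψ, φ⟫`.
-/

section Positive

variable {𝕜 E F : Type*} [RCLike 𝕜] [NormedAddCommGroup E] [InnerProductSpace 𝕜 E]
  [NormedAddCommGroup F] [InnerProductSpace 𝕜 F]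

namespace ContinuousLinearMap

theorem IsPositive.re_inner_sub_apply_apply_nonneg {A : E →L[𝕜] E} (hA : A.IsPositive)
    (hA' : (1 - A).IsPositive) (x : E) : 0 ≤ re ⟪x - A x, A x⟫_𝕜 := by
  -- With y = x - A x and w = A x one has A y = (1 - A) w and y + w = x.
  have hsplit : ⟪A x, x - A x⟫_𝕜 = ⟪A (x - A x), x - A x⟫_𝕜 + ⟪(1 - A) (A x), A x⟫_𝕜 := by
    have hAy : A (x - A x) = (1 - A) (A x) := by simp [map_sub]
    rw [hAy, ← inner_add_right, sub_add_cancel, hA'.inner_left_eq_inner_right]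
    simp
  rw [inner_re_symm, hsplit, map_add]
  exact add_nonneg (hA.re_inner_nonneg_left _) (hA'.re_inner_nonneg_left _)

theorem IsPositive.norm_sub_apply_sq_add_norm_apply_sq_le {A : E →L[𝕜] E} (hA : A.IsPositive)
    (hA' : (1 - A).IsPositive) (x : E) : ‖x - A x‖ ^ 2 + ‖A x‖ ^ 2 ≤ ‖x‖ ^ 2 := by
  have h := norm_add_sq (𝕜 := 𝕜) (x - A x) (A x)
  rw [sub_add_cancel] at h
  linarith [hA.re_inner_sub_apply_apply_nonneg hA' x]

theorem IsPositive.norm_apply_le {A : E →L[𝕜] E} (hA : A.IsPositive)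
    (hA' : (1 - A).IsPositive) (x : E) : ‖A x‖ ≤ ‖x‖ :=
  sq_le_sq₀ (norm_nonneg _) (norm_nonneg _) |>.mp <| by
    linarith [hA.norm_sub_apply_sq_add_norm_apply_sq_le hA' x, sq_nonneg ‖x - A x‖]

theorem IsPositive.norm_sub_sandwich_apply_sq_le {P : E →L[𝕜] E} {Q : F →L[𝕜] F} {W : E →L[𝕜] F}
    (hP : P.IsPositive) (hP' : (1 - P).IsPositive) (hQ : Q.IsPositive) (hQ' : (1 - Q).IsPositive)
    (hW : ∀ x, ‖W x‖ = ‖x‖) (x : E) :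
    ‖W x - Q (W (P x))‖ ^ 2 ≤ 2 * (‖x‖ ^ 2 - ‖Q (W (P x))‖ ^ 2) := by
  have hsplit : W x - Q (W (P x)) = W (x - P x) + (W (P x) - Q (W (P x))) := by
    rw [map_sub]; abel
  have hP_bd := hP.norm_sub_apply_sq_add_norm_apply_sq_le hP' x
  have hQ_bd := hQ.norm_sub_apply_sq_add_norm_apply_sq_le hQ' (W (P x))
  rw [hW] at hQ_bd
  calc ‖W x - Q (W (P x))‖ ^ 2
      ≤ (‖x - P x‖ + ‖W (P x) - Q (W (P x))‖) ^ 2 := by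
        rw [hsplit, ← hW (x - P x)]
        gcongr
        exact norm_add_le _ _
    _ ≤ 2 * (‖x - P x‖ ^ 2 + ‖W (P x) - Q (W (P x))‖ ^ 2) := add_sq_le
    _ ≤ 2 * (‖x‖ ^ 2 - ‖Q (W (P x))‖ ^ 2) := by linarith

end ContinuousLinearMap

end Positive

section ReInner

variable {𝕜 E : Type*} [RCLike 𝕜] [NormedAddCommGroup E] [InnerProductSpace 𝕜 E]

theorem norm_sq_sub_norm_sq_le_two_mul_re_inner_sub_smul (φ w : E) {z : 𝕜} (hz : ‖z‖ ≤ 1) :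
    ‖φ‖ ^ 2 - ‖w‖ ^ 2 ≤ 2 * re ⟪φ - z • w, φ⟫_𝕜 := by
  have hcross : re ⟪z • w, φ⟫_𝕜 ≤ ‖w‖ * ‖φ‖ :=
    calc re ⟪z • w, φ⟫_𝕜 ≤ ‖⟪z • w, φ⟫_𝕜‖ := re_le_norm _
      _ ≤ ‖z • w‖ * ‖φ‖ := norm_inner_le_norm _ _
      _ ≤ ‖w‖ * ‖φ‖ := by
        rw [norm_smul]; gcongr; exact mul_le_of_le_one_left (norm_nonneg _) hz
  rw [inner_sub_left, map_sub, inner_self_eq_norm_sq]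
  nlinarith [sq_nonneg (‖φ‖ - ‖w‖)]

theorem re_inner_smul_add_adjoint_apply [CompleteSpace E] (G : E →L[𝕜] E) (ψ : E) :
    re ⟪ψ, ((2 : 𝕜)⁻¹ • (G + adjoint G)) ψ⟫_𝕜 = re ⟪ψ, G ψ⟫_𝕜 := by
  have hadj : re ⟪ψ, adjoint G ψ⟫_𝕜 = re ⟪ψ, G ψ⟫_𝕜 := by
    rw [adjoint_inner_right, inner_re_symm]
  rw [smul_apply, add_apply, inner_smul_right, inner_add_right,
    show (2 : 𝕜)⁻¹ = ((2⁻¹ : ℝ) : 𝕜) by push_cast; rfl, re_ofReal_mul, map_add, hadj]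
  ring

end ReInner

section Inverse

variable {𝕜 E : Type*} [NontriviallyNormedField 𝕜] [NormedAddCommGroup E] [NormedSpace 𝕜 E]
  [CompleteSpace E]

theorem inverse_one_sub_smul_apply_sub {T : E →L[𝕜] E} (hT : ‖T‖ ≤ 1) {z : 𝕜}
    (hz : ‖z‖ < 1) (ψ : E) :
    Ring.inverse (1 - z • T) ψ - z • T (Ring.inverse (1 - z • T) ψ) = ψ := by
  have hzT : ‖z • T‖ < 1 :=
    (norm_smul_le z T).trans_lt (mul_lt_one_of_nonneg_of_lt_one_left (norm_nonneg _) hz hT)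
  have h := congr($(Ring.mul_inverse_cancel _ (isUnit_one_sub_of_norm_lt_one hzT)) ψ)
  simpa using h

end Inverse

theorem stmt10_general {H : Type*} [NormedAddCommGroup H] [InnerProductSpace ℂ H] [CompleteSpace H]
    (U P Q : H →L[ℂ] H) (hU : U ∈ unitary (H →L[ℂ] H))
    (hP0 : P.IsPositive) (hP1 : (1 - P).IsPositive)
    (hQ0 : Q.IsPositive) (hQ1 : (1 - Q).IsPositive)
    (z : ℂ) (hz : ‖z‖ < 1) :
    ∀ V G : H →L[ℂ] H, V = P * U * Q → G = Ring.inverse (1 - z • adjoint V) →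
      ∀ ψ : H,
        ‖(adjoint U - adjoint V) (G ψ)‖ ^ 2
          ≤ 8 * (⟪ψ, ((2 : ℂ)⁻¹ • (G + adjoint G)) ψ⟫_ℂ).re := by
  rintro V G rfl rfl ψ
  set W := adjoint U
  have hW : ∀ x, ‖W x‖ = ‖x‖ :=
    (star U).norm_map_of_mem_unitary (Unitary.star_mem hU)
  have hV : adjoint (P * U * Q) = Q * W * P := by
    rw [← star_eq_adjoint, star_mul, star_mul, hP0.isSelfAdjoint.star_eq,
      hQ0.isSelfAdjoint.star_eq, mul_assoc]
    rfl
  have hT : ‖Q * W * P‖ ≤ 1 :=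
    (Q * W * P).opNorm_le_bound zero_le_one fun x => by
      rw [one_mul]
      exact (hQ0.norm_apply_le hQ1 _).trans ((hW _).trans_le (hP0.norm_apply_le hP1 x))
  rw [hV, ← RCLike.re_to_complex, re_inner_smul_add_adjoint_apply]
  set φ := Ring.inverse (1 - z • (Q * W * P)) ψ
  have hψ : φ - z • Q (W (P φ)) = ψ := inverse_one_sub_smul_apply_sub hT hz ψ
  have hbound : ‖(W - Q * W * P) φ‖ ^ 2 ≤ 4 * re ⟪ψ, φ⟫_ℂ :=
    calc ‖(W - Q * W * P) φ‖ ^ 2 ≤ 2 * (‖φ‖ ^ 2 - ‖Q (W (P φ))‖ ^ 2) :=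
          hP0.norm_sub_sandwich_apply_sq_le hP1 hQ0 hQ1 hW φ
      _ ≤ 4 * re ⟪ψ, φ⟫_ℂ := by
          have h := norm_sq_sub_norm_sq_le_two_mul_re_inner_sub_smul φ (Q (W (P φ))) hz.le
          rw [hψ] at h
          linarith
  linarith [sq_nonneg ‖(W - Q * W * P) φ‖]

theorem stmt10 {H : Type*} [NormedAddCommGroup H] [InnerProductSpace ℂ H] [CompleteSpace H]
    (U P Q : H →L[ℂ] H) (hU : U ∈ unitary (H →L[ℂ] H))
    (hPsa : IsSelfAdjoint P) (hQsa : IsSelfAdjoint Q)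
    (hP0 : P.IsPositive) (hP1 : (1 - P).IsPositive)
    (hQ0 : Q.IsPositive) (hQ1 : (1 - Q).IsPositive)
    (z : ℂ) (hz : ‖z‖ < 1) :
    ∀ V G : H →L[ℂ] H, V = P * U * Q → G = Ring.inverse (1 - z • adjoint V) →
      ∀ ψ : H,
        ‖(adjoint U - adjoint V) (G ψ)‖ ^ 2
          ≤ 8 * (⟪ψ, ((2 : ℂ)⁻¹ • (G + adjoint G)) ψ⟫_ℂ).re :=
  stmt10_general U P Q hU hP0 hP1 hQ0 hQ1 z hz
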